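/- arXiv:0707.1552 — 3 statements merged into one kernel-verified Lean document; each statement's English description precedes it below -/
import Mathlib

section
/- Let K be a field of characteristic zero and f₁, f₂ ∈ K[x] nonconstant. If f₁ and f₂ have a common composite, then they have a common composite of degree exactly lcm(deg f₁, deg f₂). -/
/-!
Approximate roots. If `H` is monic of degree `m * L` and `m` is invertible in `K`, there is exactly
one monic `Q` of degree `L` with `deg (H - Q ^ m) < (m - 1) * L`; its coefficients are found one
at a time from the top, since for `0 < k ≤ L` the coefficient of `X ^ (m * L - k)` in `Q ^ m` is
`m` times that of `X ^ (L - k)` in `Q` plus a polynomial in the higher coefficients. If `H = G ∘ F` with `F` monic and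
`deg F ∣ L`, then composing the approximate root of `G` with `F` gives such a `Q`, so `Q = P ∘ F`.
For a normalised common composite `H = G₁ ∘ F₁ = G₂ ∘ F₂` and `L = lcm (deg F₁) (deg F₂)` this
yields `Q = P₁ ∘ F₁ = P₂ ∘ F₂`, a common composite of degree `L`.
-/

open Polynomial

namespace Polynomial

section CommRing
variable {R : Type*} [CommRing R]

theorem degree_add_pow_sub_pow_sub_lt {P a : R[X]} {s r : ℕ} (hP : P.natDegree ≤ s)
    (ha : a.natDegree ≤ r) (hrs : r < s) (n : ℕ) :
    ((P + a) ^ (n + 1) - P ^ (n + 1) - (n + 1 : R[X]) * a * P ^ n).degree < (n * s + r : ℕ) := by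
  induction n with
  | zero => simp
  | succ n ih =>
    have hrec : (P + a) ^ (n + 1 + 1) - P ^ (n + 1 + 1) - ((n + 1 : ℕ) + 1 : R[X]) * a *
        P ^ (n + 1) = ((P + a) ^ (n + 1) - P ^ (n + 1) - (n + 1 : R[X]) * a * P ^ n) * (P + a) +
          (n + 1 : R[X]) * a ^ 2 * P ^ n := by
      push_cast; ring
    rw [hrec]
    refine (degree_add_le _ _).trans_lt (max_lt ?_ ?_)
    · have hPa : (P + a).degree ≤ s :=
        degree_le_of_natDegree_le ((natDegree_add_le _ _).trans (max_le hP (by omega)))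
      calc _ ≤ _ := degree_mul_le _ _
        _ ≤ _ + (s : WithBot ℕ) := by gcongr
        _ < ((n * s + r : ℕ) : WithBot ℕ) + s := WithBot.add_lt_add_right (by simp) ih
        _ = _ := by push_cast; ring
    · refine degree_le_natDegree.trans_lt (Nat.cast_lt.mpr ?_)
      have : ((n + 1 : R[X]) * a ^ 2 * P ^ n).natDegree ≤ 0 + 2 * r + n * s := by
        refine natDegree_mul_le_of_le (natDegree_mul_le_of_le ?_ ?_) ?_
        · exact_mod_cast (natDegree_natCast (n + 1)).le
        · exact natDegree_pow_le_of_le 2 ha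
        · exact natDegree_pow_le_of_le n hP
      linarith [Nat.succ_mul n s]

theorem degree_sub_C_coeff_mul_lt {E M : R[X]} {e : ℕ} (hM : M.Monic) (hMd : M.natDegree = e)
    (hE : E.degree < (e + 1 : ℕ)) : (E - C (E.coeff e) * M).degree < e := by
  rw [degree_lt_iff_coeff_zero]
  intro j hj
  rw [coeff_sub, coeff_C_mul]
  rcases hj.eq_or_lt with rfl | hj
  · rw [← hMd, hM.coeff_natDegree, mul_one, sub_self]
  · rw [coeff_eq_zero_of_degree_lt (hE.trans_le (by exact_mod_cast hj)),
      coeff_eq_zero_of_natDegree_lt (p := M) (by omega), mul_zero, sub_zero]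

theorem comp_C_mul_X_comp (p q : R[X]) (a : R) : (p.comp (C a * X)).comp q = p.comp (C a * q) := by
  rw [comp_assoc, mul_comp, C_comp, X_comp]

end CommRing

section Field
variable {K : Type*} [Field K]

/-- Adding `a = t X ^ r` changes `P ^ (n + 1)` by `(n + 1) t X ^ r P ^ n` up to terms of degree
`< n * s + r`, so a suitable `t` cancels the coefficient of `X ^ (n * s + r)` in
`g - P ^ (n + 1)`. -/
theorem exists_monic_degree_sub_pow_lt_of_lt_succ {n s r : ℕ} (hn : (n + 1 : K) ≠ 0)
    {g P : K[X]} (hP : P.Monic) (hPd : P.natDegree = s) (hrs : r < s)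
    (hg : (g - P ^ (n + 1)).degree < (n * s + r + 1 : ℕ)) :
    ∃ P' : K[X], P'.Monic ∧ P'.natDegree = s ∧ (g - P' ^ (n + 1)).degree < (n * s + r : ℕ) := by
  set E := g - P ^ (n + 1)
  set a := C (E.coeff (n * s + r) / (n + 1)) * X ^ r
  have ha : a.natDegree ≤ r := natDegree_C_mul_X_pow_le _ _
  have haP : a.degree < P.degree := by
    rw [degree_eq_natDegree hP.ne_zero, hPd]
    exact (degree_le_of_natDegree_le ha).trans_lt (by exact_mod_cast hrs)
  refine ⟨P + a, hP.add_of_left haP, by rw [natDegree_add_eq_left_of_degree_lt haP, hPd], ?_⟩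
  have hsplit : g - (P + a) ^ (n + 1) = (E - C (E.coeff (n * s + r)) * (X ^ r * P ^ n)) -
      ((P + a) ^ (n + 1) - P ^ (n + 1) - (n + 1 : K[X]) * a * P ^ n) := by
    have : C (E.coeff (n * s + r)) = (n + 1 : K[X]) * C (E.coeff (n * s + r) / (n + 1)) := by
      rw [← C_eq_natCast, ← C_1, ← C_add, ← C_mul, mul_div_cancel₀ _ hn]
    rw [this]; ring
  rw [hsplit]
  refine (degree_sub_le _ _).trans_lt (max_lt ?_ (degree_add_pow_sub_pow_sub_lt hPd.le ha hrs n))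
  refine degree_sub_C_coeff_mul_lt ((monic_X_pow r).mul (hP.pow n)) ?_ hg
  rw [(monic_X_pow r).natDegree_mul (hP.pow n), natDegree_X_pow, natDegree_pow, hPd]; ring

/-- `P` is an approximate `m`-th root of `g` in the sense of Abhyankar–Moh. -/
def IsApproxRoot (m : ℕ) (g P : K[X]) : Prop :=
  P.Monic ∧ (g - P ^ m).degree < ((m - 1) * P.natDegree : ℕ)

theorem exists_isApproxRoot {m s : ℕ} (hm : (m : K) ≠ 0) {g : K[X]} (hg : g.Monic)
    (hgd : g.natDegree = m * s) : ∃ P : K[X], P.natDegree = s ∧ IsApproxRoot m g P := by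
  obtain ⟨n, rfl⟩ := Nat.exists_eq_succ_of_ne_zero (n := m) (by rintro rfl; simp at hm)
  have hn : (n + 1 : K) ≠ 0 := by exact_mod_cast hm
  suffices ∀ k ≤ s, ∃ P : K[X], P.Monic ∧ P.natDegree = s ∧
      (g - P ^ (n + 1)).degree < (n * s + (s - k) : ℕ) by
    obtain ⟨P, hP, hPd, hgP⟩ := this s le_rfl
    exact ⟨P, hPd, hP, by simpa [hPd] using hgP⟩
  intro k hk
  induction k with
  | zero =>
    have hXs : (((X : K[X]) ^ s) ^ (n + 1)).Monic := (monic_X_pow s).pow (n + 1)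
    have hdeg : g.degree = (((X : K[X]) ^ s) ^ (n + 1)).degree := by
      rw [degree_eq_natDegree hg.ne_zero, degree_eq_natDegree hXs.ne_zero, hgd, natDegree_pow,
        natDegree_X_pow, mul_comm]
    refine ⟨X ^ s, monic_X_pow s, natDegree_X_pow s, ?_⟩
    rw [show n * s + (s - 0) = g.natDegree by rw [hgd, Nat.sub_zero, Nat.succ_mul],
      ← degree_eq_natDegree hg.ne_zero]
    exact degree_sub_lt_left hdeg hg.ne_zero (by rw [hg.leadingCoeff, hXs.leadingCoeff])
  | succ k ih =>
    obtain ⟨P, hP, hPd, hgP⟩ := ih (by omega)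
    exact exists_monic_degree_sub_pow_lt_of_lt_succ hn hP hPd (r := s - (k + 1)) (by omega)
      (by rwa [show n * s + (s - (k + 1)) + 1 = n * s + (s - k) by omega])

theorem IsApproxRoot.eq {m : ℕ} (hm : (m : K) ≠ 0) {g P Q : K[X]} (hP : IsApproxRoot m g P)
    (hQ : IsApproxRoot m g Q) (hPQ : P.natDegree = Q.natDegree) : P = Q := by
  obtain ⟨n, rfl⟩ := Nat.exists_eq_succ_of_ne_zero (n := m) (by rintro rfl; simp at hm)
  by_contra hne
  set D := P - Q
  have hD : D ≠ 0 := sub_ne_zero.mpr hne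
  have hDQ : D.natDegree < Q.natDegree := by
    rw [← hPQ, natDegree_lt_iff_degree_lt hD, ← degree_eq_natDegree hP.1.ne_zero]
    refine degree_sub_lt_left ?_ hP.1.ne_zero (by rw [hP.1.leadingCoeff, hQ.1.leadingCoeff])
    rw [degree_eq_natDegree hP.1.ne_zero, degree_eq_natDegree hQ.1.ne_zero, hPQ]
  have hlead : ((n + 1 : K[X]) * D * Q ^ n).degree = (n * Q.natDegree + D.natDegree : ℕ) := by
    have hn : (n + 1 : K) ≠ 0 := by exact_mod_cast hm
    rw [show (n + 1 : K[X]) = C (n + 1 : K) by simp, degree_mul, degree_mul, degree_C hn,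
      degree_eq_natDegree hD, degree_eq_natDegree (hQ.1.pow n).ne_zero, natDegree_pow]
    norm_cast; ring
  have hdiff : P ^ (n + 1) - Q ^ (n + 1) = (n + 1 : K[X]) * D * Q ^ n +
      ((Q + D) ^ (n + 1) - Q ^ (n + 1) - (n + 1 : K[X]) * D * Q ^ n) := by
    rw [add_sub_cancel]; ring
  have hexact : (P ^ (n + 1) - Q ^ (n + 1)).degree = (n * Q.natDegree + D.natDegree : ℕ) := by
    rw [hdiff, degree_add_eq_left_of_degree_lt
      (hlead ▸ degree_add_pow_sub_pow_sub_lt le_rfl le_rfl hDQ n), hlead]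
  have hsmall : (P ^ (n + 1) - Q ^ (n + 1)).degree < (n * Q.natDegree : ℕ) := by
    rw [show P ^ (n + 1) - Q ^ (n + 1) = (g - Q ^ (n + 1)) - (g - P ^ (n + 1)) by ring]
    refine (degree_sub_le _ _).trans_lt (max_lt ?_ ?_)
    · simpa using hQ.2
    · simpa [hPQ] using hP.2
  rw [hexact, Nat.cast_lt] at hsmall
  omega

theorem IsApproxRoot.comp {m : ℕ} {g P F : K[X]} (h : IsApproxRoot m g P) (hF : F.Monic)
    (hFd : F.natDegree ≠ 0) : IsApproxRoot m (g.comp F) (P.comp F) := by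
  refine ⟨h.1.comp hF hFd, ?_⟩
  rw [← pow_comp, ← sub_comp, natDegree_comp]
  rcases eq_or_ne (g - P ^ m) 0 with h0 | h0
  · rw [h0, zero_comp, degree_zero]
    exact WithBot.bot_lt_coe _
  have hlt : (g - P ^ m).natDegree < (m - 1) * P.natDegree :=
    (natDegree_lt_iff_degree_lt h0).mpr h.2
  refine degree_le_natDegree.trans_lt ?_
  rw [natDegree_comp, Nat.cast_lt, ← mul_assoc]
  exact Nat.mul_lt_mul_of_pos_right hlt (Nat.pos_of_ne_zero hFd)

theorem IsApproxRoot.monic_and_natDegree_eq {m : ℕ} {g P : K[X]} (h : IsApproxRoot m g P) :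
    g.Monic ∧ g.natDegree = m * P.natDegree := by
  have hPm : (P ^ m).Monic := h.1.pow m
  have hlt : (g - P ^ m).degree < (P ^ m).degree := by
    rw [degree_eq_natDegree hPm.ne_zero, natDegree_pow]
    exact h.2.trans_le (Nat.cast_le.mpr (Nat.mul_le_mul_right _ (Nat.sub_le m 1)))
  rw [← add_sub_cancel (P ^ m) g]
  exact ⟨hPm.add_of_left hlt, by rw [natDegree_add_eq_left_of_degree_lt hlt, natDegree_pow]⟩

theorem IsApproxRoot.exists_eq_comp {m : ℕ} (hm : (m : K) ≠ 0) {G F Q : K[X]}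
    (hQ : IsApproxRoot m (G.comp F) Q) (hF : F.Monic) (hFd : F.natDegree ≠ 0)
    (hdvd : F.natDegree ∣ Q.natDegree) : ∃ P : K[X], Q = P.comp F := by
  obtain ⟨s, hs⟩ := hdvd
  obtain ⟨hH, hHd⟩ := hQ.monic_and_natDegree_eq
  have hG : G.Monic := by
    have := leadingCoeff_comp (p := G) hFd
    rwa [hH.leadingCoeff, hF.leadingCoeff, one_pow, mul_one, eq_comm] at this
  have hGd : G.natDegree = m * s := by
    rw [natDegree_comp, hs] at hHd
    exact Nat.eq_of_mul_eq_mul_right (Nat.pos_of_ne_zero hFd) (by rw [hHd]; ring)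
  obtain ⟨P, hPd, hP⟩ := exists_isApproxRoot hm hG hGd
  exact ⟨P, hQ.eq hm (hP.comp hF hFd) (by rw [natDegree_comp, hPd, hs, mul_comm])⟩

def HasCommonCompositeOfDegree (f₁ f₂ : K[X]) (N : ℕ) : Prop :=
  ∃ g₁ g₂ : K[X], g₁.natDegree ≠ 0 ∧ g₂.natDegree ≠ 0 ∧ g₁.comp f₁ = g₂.comp f₂ ∧
    (g₁.comp f₁).natDegree = N

theorem HasCommonCompositeOfDegree.of_C_mul {f₁ f₂ : K[X]} {N : ℕ} {a b : K} (ha : a ≠ 0)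
    (hb : b ≠ 0) (h : HasCommonCompositeOfDegree (C a * f₁) (C b * f₂) N) :
    HasCommonCompositeOfDegree f₁ f₂ N := by
  obtain ⟨g₁, g₂, hg₁, hg₂, hcomp, hN⟩ := h
  refine ⟨g₁.comp (C a * X), g₂.comp (C b * X), ?_, ?_, ?_, ?_⟩
  · rwa [natDegree_comp, natDegree_C_mul_X a ha, mul_one]
  · rwa [natDegree_comp, natDegree_C_mul_X b hb, mul_one]
  · rwa [comp_C_mul_X_comp, comp_C_mul_X_comp]
  · rwa [comp_C_mul_X_comp]

theorem hasCommonCompositeOfDegree_C_mul_iff {f₁ f₂ : K[X]} {N : ℕ} {a b : K} (ha : a ≠ 0)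
    (hb : b ≠ 0) :
    HasCommonCompositeOfDegree (C a * f₁) (C b * f₂) N ↔ HasCommonCompositeOfDegree f₁ f₂ N := by
  refine ⟨.of_C_mul ha hb, fun h ↦ .of_C_mul (inv_ne_zero ha) (inv_ne_zero hb) ?_⟩
  rwa [← mul_assoc, ← C_mul, inv_mul_cancel₀ ha, C_1, one_mul, ← mul_assoc, ← C_mul,
    inv_mul_cancel₀ hb, C_1, one_mul]

theorem HasCommonCompositeOfDegree.lcm_of_monic [CharZero K] {F₁ F₂ : K[X]} {N : ℕ}
    (h : HasCommonCompositeOfDegree F₁ F₂ N) (hF₁ : F₁.Monic) (hF₂ : F₂.Monic)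
    (hd₁ : F₁.natDegree ≠ 0) (hd₂ : F₂.natDegree ≠ 0) :
    HasCommonCompositeOfDegree F₁ F₂ (Nat.lcm F₁.natDegree F₂.natDegree) := by
  obtain ⟨G₁, G₂, hG₁, -, hcomp, -⟩ := h
  have hdeg : (G₁.comp F₁).natDegree ≠ 0 := by rw [natDegree_comp]; exact mul_ne_zero hG₁ hd₁
  have hlc : (G₁.comp F₁).leadingCoeff ≠ 0 :=
    leadingCoeff_ne_zero.mpr (ne_zero_of_natDegree_gt (Nat.pos_of_ne_zero hdeg))
  set c := (G₁.comp F₁).leadingCoeff⁻¹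
  set H := C c * G₁.comp F₁
  have hH : H.Monic := monic_C_mul_of_mul_leadingCoeff_eq_one (inv_mul_cancel₀ hlc)
  have hH₁ : H = (C c * G₁).comp F₁ := by rw [mul_comp, C_comp]
  have hH₂ : H = (C c * G₂).comp F₂ := by rw [mul_comp, C_comp, ← hcomp]
  have hHd : H.natDegree ≠ 0 := by rwa [natDegree_C_mul (inv_ne_zero hlc)]
  obtain ⟨m, hm⟩ : Nat.lcm F₁.natDegree F₂.natDegree ∣ H.natDegree :=
    Nat.lcm_dvd (by rw [hH₁, natDegree_comp]; exact dvd_mul_left _ _)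
      (by rw [hH₂, natDegree_comp]; exact dvd_mul_left _ _)
  have hm0 : (m : K) ≠ 0 := Nat.cast_ne_zero.mpr (by rintro rfl; exact hHd hm)
  obtain ⟨Q, hQd, hQ⟩ := exists_isApproxRoot hm0 hH (hm.trans (mul_comm _ _))
  obtain ⟨P₁, rfl⟩ := (hH₁ ▸ hQ).exists_eq_comp hm0 hF₁ hd₁ (hQd ▸ Nat.dvd_lcm_left _ _)
  obtain ⟨P₂, hP⟩ := (hH₂ ▸ hQ).exists_eq_comp hm0 hF₂ hd₂ (hQd ▸ Nat.dvd_lcm_right _ _)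
  have hL : Nat.lcm F₁.natDegree F₂.natDegree ≠ 0 := Nat.lcm_ne_zero hd₁ hd₂
  refine ⟨P₁, P₂, ?_, ?_, hP, hQd⟩
  · exact left_ne_zero_of_mul (natDegree_comp (p := P₁) ▸ hQd ▸ hL)
  · exact left_ne_zero_of_mul (natDegree_comp (p := P₂) ▸ hP ▸ hQd ▸ hL)

theorem HasCommonCompositeOfDegree.lcm [CharZero K] {f₁ f₂ : K[X]} {N : ℕ}
    (h : HasCommonCompositeOfDegree f₁ f₂ N) (hf₁ : f₁.natDegree ≠ 0) (hf₂ : f₂.natDegree ≠ 0) :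
    HasCommonCompositeOfDegree f₁ f₂ (Nat.lcm f₁.natDegree f₂.natDegree) := by
  have hc₁ : f₁.leadingCoeff ≠ 0 :=
    leadingCoeff_ne_zero.mpr (ne_zero_of_natDegree_gt (Nat.pos_of_ne_zero hf₁))
  have hc₂ : f₂.leadingCoeff ≠ 0 :=
    leadingCoeff_ne_zero.mpr (ne_zero_of_natDegree_gt (Nat.pos_of_ne_zero hf₂))
  rw [← hasCommonCompositeOfDegree_C_mul_iff (inv_ne_zero hc₁) (inv_ne_zero hc₂)] at h ⊢
  have hd₁ := natDegree_C_mul (p := f₁) (inv_ne_zero hc₁)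
  have hd₂ := natDegree_C_mul (p := f₂) (inv_ne_zero hc₂)
  simpa only [hd₁, hd₂] using h.lcm_of_monic
    (monic_C_mul_of_mul_leadingCoeff_eq_one (inv_mul_cancel₀ hc₁))
    (monic_C_mul_of_mul_leadingCoeff_eq_one (inv_mul_cancel₀ hc₂)) (hd₁ ▸ hf₁) (hd₂ ▸ hf₂)

end Field

end Polynomial

theorem stmt_5 (K : Type*) [Field K] [CharZero K] (f₁ f₂ : K[X])
    (hf₁ : f₁.natDegree ≠ 0) (hf₂ : f₂.natDegree ≠ 0)
    (h : ∃ g₁ g₂ : K[X], g₁.natDegree ≠ 0 ∧ g₂.natDegree ≠ 0 ∧ g₁.comp f₁ = g₂.comp f₂) :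
    ∃ g₁ g₂ : K[X], g₁.natDegree ≠ 0 ∧ g₂.natDegree ≠ 0 ∧ g₁.comp f₁ = g₂.comp f₂ ∧
      (g₁.comp f₁).natDegree = Nat.lcm f₁.natDegree f₂.natDegree := by
  obtain ⟨g₁, g₂, hg₁, hg₂, hcomp⟩ := h
  exact HasCommonCompositeOfDegree.lcm ⟨g₁, g₂, hg₁, hg₂, hcomp, rfl⟩ hf₁ hf₂
end

section
/- Let K be a field of characteristic p > 0 with p not dividing nm, where n, m > 1. Let d be the multiplicative order of p modulo lcm(m, n). Then (x^{p^d} − x)^{lcm(m,n)} is a common composite of x^n and (x−1)^m over K, and no common composite has smaller degree. -/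
open Polynomial Function

/-!
Let `h = g₁(xⁿ) = g₂((x - 1)ᵐ)` and pass to an algebraic closure. There `h` is invariant
under `x ↦ a x` and `x ↦ b (x - 1) + 1` for primitive `n`-th and `m`-th roots of unity `a`,
`b`. The commutator of these two maps is the translation by `t₀ = (a - 1)(1 - b) ≠ 0`, and
conjugating a translation by them multiplies it by `a`, resp. `b`; hence every element of
`t₀ 𝔽_p(a, b)` is a period of `h`. The roots of `h`, counted with multiplicity, are then a
union of cosets of this additive group, so `|𝔽_p(a, b)| = p^k` divides `deg h`. Since
`lcm(m, n) ∣ p^k - 1`, the order `d` of `p` modulo `lcm(m, n)` divides `k`, so `p^d ∣ deg h`;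
together with `lcm(m, n) ∣ deg h` this gives `deg h ≥ p^d lcm(m, n)`.

Conversely `x^{p^d} - x = x (x^{p^d - 1} - 1)` with `n, m ∣ p^d - 1`, so its `lcm(m, n)`-th
power is a polynomial in `xⁿ`, and also one in `xᵐ`; substituting `x - 1` for `x` turns the
latter into a polynomial in `(x - 1)ᵐ` and leaves `x^{p^d} - x` unchanged in characteristic `p`.
-/

theorem ZMod.natCast_eq_one_iff_dvd_sub_one {x : ℕ} (hx : 0 < x) (L : ℕ) :
    (x : ZMod L) = 1 ↔ L ∣ x - 1 := by
  rw [← Nat.cast_one, ZMod.natCast_eq_natCast_iff, Nat.ModEq.comm, Nat.modEq_iff_dvd' hx]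

theorem dvd_pow_orderOf_sub_one {p : ℕ} (hp : 0 < p) (L : ℕ) :
    L ∣ p ^ orderOf (p : ZMod L) - 1 := by
  rw [← ZMod.natCast_eq_one_iff_dvd_sub_one (pow_pos hp _), Nat.cast_pow, pow_orderOf_eq_one]

theorem pow_orderOf_dvd_pow_of_dvd_pow_sub_one {p k L : ℕ} (hp : 0 < p) (hk : 0 < k)
    (h : L ∣ p ^ k - 1) : p ^ orderOf (p : ZMod L) ∣ p ^ k := by
  rw [← ZMod.natCast_eq_one_iff_dvd_sub_one (pow_pos hp _), Nat.cast_pow] at h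
  exact pow_dvd_pow p (Nat.le_of_dvd hk (orderOf_dvd_of_pow_eq_one h))

theorem Nat.Prime.coprime_lcm_of_not_dvd_mul {p n m : ℕ} (hp : p.Prime) (h : ¬ p ∣ n * m) :
    p.Coprime (Nat.lcm m n) :=
  hp.coprime_iff_not_dvd.mpr fun hL ↦ h (mul_comm m n ▸ hL.trans (Nat.lcm_dvd_mul m n))

theorem one_lt_pow_orderOf_natCast {p L : ℕ} (hp : 1 < p) (hL : L ≠ 0) (h : p.Coprime L) :
    1 < p ^ orderOf (p : ZMod L) := by
  have : NeZero L := ⟨hL⟩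
  rw [← ZMod.coe_unitOfCoprime p h, orderOf_units]
  exact Nat.one_lt_pow (orderOf_pos _).ne' hp

section Periodic

variable {A B : Type*} [Field A] {f : A → B}

theorem Function.Periodic.mul_of_affine_invariant {u c t : A} (hf : ∀ x, f (u * x + c) = f x)
    (hu : u ≠ 0) (ht : Periodic f t) : Periodic f (u * t) := by
  intro x
  have hx : u * ((x - c) / u) + c = x := by field_simp; ring
  calc f (x + u * t) = f (u * ((x - c) / u + t) + c) := by rw [mul_add, add_right_comm, hx]
    _ = f x := by rw [hf, ht, ← hf, hx]

/-- The period is the translation part of the commutator of the two affine maps. -/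
theorem Function.periodic_of_affine_invariant_pair {a b c c' : A}
    (ha : ∀ x, f (a * x + c) = f x) (hb : ∀ x, f (b * x + c') = f x) (hab : a * b ≠ 0) :
    Periodic f (a * c' + c - (b * c + c')) := by
  intro y
  set x := (y - (b * c + c')) / (a * b)
  have hx : a * b * x = y - (b * c + c') := mul_div_cancel₀ _ hab
  have hy : b * (a * x + c) + c' = y := by linear_combination hx
  calc f (y + (a * c' + c - (b * c + c'))) = f (a * (b * x + c') + c) := by
        congr 1; linear_combination -hx
    _ = f y := by rw [ha, hb, ← ha x, ← hb (a * x + c), hy]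

theorem Function.Periodic.mul_of_mem_adjoin {p : ℕ} [Fact p.Prime] [Algebra (ZMod p) A]
    {S : Set A} (hS : ∀ s ∈ S, IsIntegral (ZMod p) s)
    (hmul : ∀ s ∈ S, ∀ t, Periodic f t → Periodic f (s * t))
    {x t : A} (hx : x ∈ IntermediateField.adjoin (ZMod p) S) (ht : Periodic f t) :
    Periodic f (x * t) := by
  rw [← IntermediateField.mem_toSubalgebra, IntermediateField.adjoin_toSubalgebra_of_isAlgebraic
    fun s hs ↦ (hS s hs).isAlgebraic] at hx
  induction hx using Algebra.adjoin_induction generalizing t with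
  | mem s hs => exact hmul s hs t ht
  | algebraMap r => rw [← ZMod.natCast_zmod_val r, map_natCast]; exact ht.nat_mul _
  | add x y _ _ hx hy => rw [add_mul]; exact (hx ht).add_period (hy ht)
  | mul x y _ _ hx hy => rw [mul_assoc]; exact hx (hy ht)

end Periodic

theorem Multiset.natCard_dvd_card_of_count_add_eq {A : Type*} [AddCommGroup A] [DecidableEq A]
    (V : AddSubgroup A) [Finite V] (s : Multiset A)
    (hs : ∀ v ∈ V, ∀ x, s.count (x + v) = s.count x) : Nat.card V ∣ Multiset.card s := by
  classical
  have := Fintype.ofFinite V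
  rw [← Multiset.toFinset_sum_count_eq, ← Finset.sum_fiberwise_of_maps_to
    (g := (QuotientAddGroup.mk : A → A ⧸ V)) (t := s.toFinset.image QuotientAddGroup.mk)
    fun x hx ↦ Finset.mem_image_of_mem _ hx]
  refine Finset.dvd_sum fun _ hy ↦ ?_
  obtain ⟨x, hx, rfl⟩ := Finset.mem_image.mp hy
  have hfiber : {y ∈ s.toFinset | (QuotientAddGroup.mk y : A ⧸ V) = QuotientAddGroup.mk x} =
      Finset.univ.map
        ⟨fun v : V ↦ x + v, (add_right_injective x).comp Subtype.val_injective⟩ := by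
    ext y
    simp only [Finset.mem_filter, Finset.mem_map, Finset.mem_univ, true_and,
      Embedding.coeFn_mk, QuotientAddGroup.eq]
    constructor
    · rintro ⟨-, hy⟩
      exact ⟨⟨-x + y, by simpa using V.neg_mem hy⟩, by simp⟩
    · rintro ⟨v, rfl⟩
      refine ⟨?_, by simp⟩
      rw [Multiset.mem_toFinset, ← Multiset.count_ne_zero, hs v v.2]
      exact Multiset.count_ne_zero.mpr (Multiset.mem_toFinset.mp hx)
  rw [hfiber, Finset.sum_map]
  simp only [Embedding.coeFn_mk, fun v : V ↦ hs v v.2 x, Finset.sum_const, Finset.card_univ,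
    smul_eq_mul, Nat.card_eq_fintype_card]
  exact dvd_mul_right _ _

theorem Polynomial.natCard_dvd_natDegree_of_periodic {A : Type*} [Field A] [IsAlgClosed A]
    (H : A[X]) (V : AddSubgroup A) [Finite V] (hV : ∀ v ∈ V, Periodic H.eval v) :
    Nat.card V ∣ H.natDegree := by
  classical
  rw [← IsAlgClosed.card_roots_eq_natDegree]
  refine Multiset.natCard_dvd_card_of_count_add_eq V _ fun v hv x ↦ ?_
  have hcomp : H.comp (X + C v) = H := Polynomial.funext fun y ↦ by
    simpa [eval_comp] using hV v hv y
  have hshift : H.comp (X + C (x + v)) = H.comp (X + C x) := by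
    conv_rhs => rw [← hcomp, comp_assoc]
    simp only [add_comp, X_comp, C_comp, C_add, add_assoc]
  rw [count_roots, count_roots, rootMultiplicity_eq_rootMultiplicity,
    rootMultiplicity_eq_rootMultiplicity (t := x), hshift]

section AdjoinRootsOfUnity

open IntermediateField

variable {A : Type*} [Field A] {p : ℕ} [Fact p.Prime] [Algebra (ZMod p) A] {a b : A} {n m : ℕ}

theorem finite_adjoin_pair_of_isPrimitiveRoot (ha : IsPrimitiveRoot a n) (hb : IsPrimitiveRoot b m)
    (hn : 0 < n) (hm : 0 < m) : Finite (ZMod p)⟮a, b⟯ :=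
  have := finiteDimensional_adjoin_pair
    (IsIntegral.of_pow (R := ZMod p) hn (ha.pow_eq_one ▸ isIntegral_one))
    (IsIntegral.of_pow (R := ZMod p) hm (hb.pow_eq_one ▸ isIntegral_one))
  Module.finite_of_finite (ZMod p)

theorem pow_orderOf_dvd_natCard_adjoin_pair (ha : IsPrimitiveRoot a n)
    (hb : IsPrimitiveRoot b m) (hn : 0 < n) (hm : 0 < m) :
    p ^ orderOf (p : ZMod (Nat.lcm m n)) ∣ Nat.card (ZMod p)⟮a, b⟯ := by
  set F := (ZMod p)⟮a, b⟯
  have := finite_adjoin_pair_of_isPrimitiveRoot (p := p) ha hb hn hm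
  have := Fintype.ofFinite F
  have hcard : Nat.card F = p ^ Module.finrank (ZMod p) F := by
    rw [Nat.card_eq_fintype_card, Module.card_eq_pow_finrank (K := ZMod p), ZMod.card]
  have hdvd {x : A} {r : ℕ} (hx : IsPrimitiveRoot x r) (hr : 0 < r) (hxF : x ∈ F) :
      r ∣ Nat.card F - 1 := by
    refine hx.dvd_of_pow_eq_one _ ?_
    have hx0 : (⟨x, hxF⟩ : F) ≠ 0 := by simpa [← Subtype.coe_ne_coe] using hx.ne_zero hr.ne'
    simpa [Nat.card_eq_fintype_card] using
      congr_arg Subtype.val (FiniteField.pow_card_sub_one_eq_one (K := F) _ hx0)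
  rw [hcard] at hdvd ⊢
  exact pow_orderOf_dvd_pow_of_dvd_pow_sub_one (Fact.out : p.Prime).pos Module.finrank_pos
    (Nat.lcm_dvd (hdvd hb hm (mem_adjoin_pair_right _ _ _))
      (hdvd ha hn (mem_adjoin_pair_left _ _ _)))

end AdjoinRootsOfUnity

theorem pow_orderOf_dvd_natDegree_of_affine_invariant {A : Type*} [Field A] [IsAlgClosed A]
    {p : ℕ} [Fact p.Prime] [CharP A p] {H : A[X]} {a b : A} {n m : ℕ}
    (ha : IsPrimitiveRoot a n) (hb : IsPrimitiveRoot b m) (hn : 1 < n) (hm : 1 < m)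
    (hHa : ∀ x, H.eval (a * x) = H.eval x) (hHb : ∀ x, H.eval (b * x + (1 - b)) = H.eval x) :
    p ^ orderOf (p : ZMod (Nat.lcm m n)) ∣ H.natDegree := by
  let := ZMod.algebra A p
  set F := IntermediateField.adjoin (ZMod p) {a, b}
  have : Finite F := finite_adjoin_pair_of_isPrimitiveRoot ha hb (by omega) (by omega)
  have hHa' : ∀ x, H.eval (a * x + 0) = H.eval x := by simpa using hHa
  set t₀ := (a - 1) * (1 - b)
  have ht₀ : Periodic H.eval t₀ := by
    convert periodic_of_affine_invariant_pair (f := fun x ↦ H.eval x) hHa' hHb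
      (mul_ne_zero (ha.ne_zero (by omega)) (hb.ne_zero (by omega))) using 1
    ring
  have ht₀0 : t₀ ≠ 0 := mul_ne_zero (sub_ne_zero.mpr (ha.ne_one hn))
    (sub_ne_zero.mpr (hb.ne_one hm).symm)
  -- the translations by `t₀ F` are periods of `H`, and there are `|F|` of them
  set V := F.toSubfield.toAddSubgroup.map (AddMonoidHom.mulRight t₀)
  have hVF : V ≃+ F := (AddSubgroup.equivMapOfInjective _ _ (mul_left_injective₀ ht₀0)).symm
  have : Finite V := .of_equiv _ hVF.symm.toEquiv
  have hV : ∀ v ∈ V, Periodic H.eval v := by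
    rintro _ ⟨x, hx, rfl⟩
    refine ht₀.mul_of_mem_adjoin (S := {a, b}) ?_ ?_ hx
    · rintro s (rfl | rfl)
      exacts [IsIntegral.of_pow (by omega : 0 < n) (ha.pow_eq_one ▸ isIntegral_one),
        IsIntegral.of_pow (by omega : 0 < m) (hb.pow_eq_one ▸ isIntegral_one)]
    · rintro s (rfl | rfl) t ht
      exacts [ht.mul_of_affine_invariant hHa' (ha.ne_zero (by omega)),
        ht.mul_of_affine_invariant hHb (hb.ne_zero (by omega))]
  exact (pow_orderOf_dvd_natCard_adjoin_pair ha hb (by omega) (by omega)).trans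
    (Nat.card_congr hVF.toEquiv ▸ natCard_dvd_natDegree_of_periodic H V hV)

theorem pow_orderOf_dvd_natDegree_of_comp_eq {K : Type*} [Field K] {p : ℕ} [Fact p.Prime]
    [CharP K p] {n m : ℕ} (hn : 1 < n) (hm : 1 < m) (hpn : ¬ p ∣ n) (hpm : ¬ p ∣ m)
    {g₁ g₂ : K[X]} (h : g₁.comp (X ^ n) = g₂.comp ((X - 1) ^ m)) :
    p ^ orderOf (p : ZMod (Nat.lcm m n)) ∣ (g₁.comp (X ^ n)).natDegree := by
  have : NeZero (n : K) := ⟨by rwa [Ne, CharP.cast_eq_zero_iff K p]⟩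
  have : NeZero (m : K) := ⟨by rwa [Ne, CharP.cast_eq_zero_iff K p]⟩
  obtain ⟨a, ha⟩ := HasEnoughRootsOfUnity.exists_primitiveRoot (AlgebraicClosure K) n
  obtain ⟨b, hb⟩ := HasEnoughRootsOfUnity.exists_primitiveRoot (AlgebraicClosure K) m
  rw [← natDegree_map (algebraMap K (AlgebraicClosure K))]
  refine pow_orderOf_dvd_natDegree_of_affine_invariant ha hb hn hm (fun x ↦ ?_) (fun x ↦ ?_)
  · simp only [Polynomial.map_comp, Polynomial.map_pow, map_X, eval_comp, eval_pow, eval_X,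
      mul_pow, ha.pow_eq_one, one_mul]
  · have hx : b * x + (1 - b) - 1 = b * (x - 1) := by ring
    simp only [h, Polynomial.map_comp, Polynomial.map_pow, Polynomial.map_sub, map_X,
      Polynomial.map_one, eval_comp, eval_pow, eval_sub, eval_X, eval_one, hx, mul_pow,
      hb.pow_eq_one, one_mul]

namespace Polynomial

theorem natDegree_ne_zero_of_comp_eq {R : Type*} [Semiring R] {g f h : R[X]}
    (hgf : g.comp f = h) (hh : h.natDegree ≠ 0) : g.natDegree ≠ 0 := by
  intro hg
  rw [eq_C_of_natDegree_eq_zero hg, C_comp] at hgf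
  exact hh (hgf ▸ natDegree_C _)

theorem exists_comp_X_pow_eq_X_pow_sub_X_pow {R : Type*} [CommRing R] {k q L : ℕ}
    (hq : 0 < q) (hkL : k ∣ L) (hkq : k ∣ q - 1) :
    ∃ g : R[X], g.comp (X ^ k) = (X ^ q - X) ^ L := by
  obtain ⟨L', rfl⟩ := hkL
  obtain ⟨r, hr⟩ := hkq
  refine ⟨X ^ L' * (X ^ r - 1) ^ (k * L'), ?_⟩
  rw [mul_comp, pow_comp, pow_comp, sub_comp, pow_comp, X_comp, one_comp, ← pow_mul, ← pow_mul,
    ← hr, ← mul_pow, mul_sub, mul_one, ← pow_succ', Nat.sub_add_cancel hq]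

theorem X_pow_char_pow_sub_X_comp_X_sub_one {R : Type*} [CommRing R] (p d : ℕ)
    [Fact p.Prime] [CharP R p] : (X ^ (p ^ d) - X : R[X]).comp (X - 1) = X ^ (p ^ d) - X := by
  rw [sub_comp, pow_comp, X_comp, sub_pow_char_pow, one_pow]
  ring

theorem natDegree_X_pow_sub_X {R : Type*} [Ring R] [Nontrivial R] {q : ℕ} (hq : 1 < q) :
    (X ^ q - X : R[X]).natDegree = q := by
  rw [natDegree_sub_eq_left_of_natDegree_lt] <;> simp [hq]

def IsCommonComposite {R : Type*} [Semiring R] (f₁ f₂ h : R[X]) : Prop :=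
  ∃ g₁ g₂ : R[X], g₁.natDegree ≠ 0 ∧ g₂.natDegree ≠ 0 ∧ g₁.comp f₁ = h ∧ g₂.comp f₂ = h

theorem isCommonComposite_X_pow_sub_X_pow_lcm {R : Type*} [CommRing R] [IsDomain R] {p : ℕ}
    [Fact p.Prime] [CharP R p] {n m d : ℕ} (hn : 0 < n) (hm : 0 < m) (hq : 1 < p ^ d)
    (hL : Nat.lcm m n ∣ p ^ d - 1) :
    IsCommonComposite (X ^ n) ((X - 1) ^ m) ((X ^ (p ^ d) - X : R[X]) ^ Nat.lcm m n) := by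
  have hdeg : ((X ^ (p ^ d) - X : R[X]) ^ Nat.lcm m n).natDegree ≠ 0 := by
    rw [natDegree_pow, natDegree_X_pow_sub_X hq]
    exact mul_ne_zero (Nat.lcm_ne_zero hm.ne' hn.ne') (by omega)
  obtain ⟨g₁, hg₁⟩ := exists_comp_X_pow_eq_X_pow_sub_X_pow (R := R) (by omega)
    (Nat.dvd_lcm_right m n) ((Nat.dvd_lcm_right m n).trans hL)
  obtain ⟨g₂, hg₂⟩ := exists_comp_X_pow_eq_X_pow_sub_X_pow (R := R) (by omega)
    (Nat.dvd_lcm_left m n) ((Nat.dvd_lcm_left m n).trans hL)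
  replace hg₂ : g₂.comp ((X - 1) ^ m) = (X ^ (p ^ d) - X) ^ Nat.lcm m n := by
    rw [← X_comp (p := X - 1), ← pow_comp, ← comp_assoc, hg₂, pow_comp,
      X_pow_char_pow_sub_X_comp_X_sub_one]
  exact ⟨g₁, g₂, natDegree_ne_zero_of_comp_eq hg₁ hdeg, natDegree_ne_zero_of_comp_eq hg₂ hdeg,
    hg₁, hg₂⟩

theorem IsCommonComposite.pow_orderOf_mul_lcm_le_natDegree {K : Type*} [Field K] {p : ℕ}
    [hp : Fact p.Prime] [CharP K p] {n m : ℕ} (hn : 1 < n) (hm : 1 < m) (hpnm : ¬ p ∣ n * m)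
    {h : K[X]} (hh : IsCommonComposite (X ^ n) ((X - 1) ^ m) h) :
    p ^ orderOf (p : ZMod (Nat.lcm m n)) * Nat.lcm m n ≤ h.natDegree := by
  obtain ⟨g₁, g₂, hg₁, -, rfl, hg₂⟩ := hh
  have hnh : n ∣ (g₁.comp (X ^ n)).natDegree := by
    rw [natDegree_comp, natDegree_X_pow]
    exact dvd_mul_left n _
  have hmh : m ∣ (g₁.comp (X ^ n)).natDegree := by
    rw [← hg₂, natDegree_comp, natDegree_pow]
    exact (dvd_mul_right m _).mul_left _
  have hqh := pow_orderOf_dvd_natDegree_of_comp_eq hn hm (fun h ↦ hpnm (h.mul_right m))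
    (fun h ↦ hpnm (h.mul_left n)) hg₂.symm
  refine Nat.le_of_dvd ?_ (Nat.Coprime.mul_dvd_of_dvd_of_dvd
    ((hp.out.coprime_lcm_of_not_dvd_mul hpnm).pow_left _) hqh (Nat.lcm_dvd hmh hnh))
  rw [natDegree_comp, natDegree_X_pow]
  exact Nat.mul_pos (Nat.pos_of_ne_zero hg₁) (by omega)

end Polynomial

theorem stmt_7 (K : Type*) [Field K] (p : ℕ) (hp : p.Prime) [CharP K p]
    (n m : ℕ) (hn : 1 < n) (hm : 1 < m) (hpnm : ¬ p ∣ n * m)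
    (d : ℕ) (hd : d = orderOf (p : ZMod (Nat.lcm m n))) :
    (∃ g₁ g₂ : K[X], g₁.natDegree ≠ 0 ∧ g₂.natDegree ≠ 0 ∧
      g₁.comp (X ^ n) = (X ^ (p ^ d) - X) ^ (Nat.lcm m n) ∧
      g₂.comp ((X - 1) ^ m) = (X ^ (p ^ d) - X) ^ (Nat.lcm m n)) ∧
    ∀ h : K[X], (∃ g₁ g₂ : K[X], g₁.natDegree ≠ 0 ∧ g₂.natDegree ≠ 0 ∧
        g₁.comp (X ^ n) = h ∧ g₂.comp ((X - 1) ^ m) = h) →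
      ((X ^ (p ^ d) - X) ^ (Nat.lcm m n) : K[X]).natDegree ≤ h.natDegree := by
  have := Fact.mk hp
  have hq : 1 < p ^ d := hd ▸ one_lt_pow_orderOf_natCast hp.one_lt
    (Nat.lcm_ne_zero (by omega) (by omega)) (hp.coprime_lcm_of_not_dvd_mul hpnm)
  have hdeg : ((X ^ (p ^ d) - X) ^ (Nat.lcm m n) : K[X]).natDegree = p ^ d * Nat.lcm m n := by
    rw [natDegree_pow, natDegree_X_pow_sub_X hq, mul_comm]
  refine ⟨isCommonComposite_X_pow_sub_X_pow_lcm (by omega) (by omega) hq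
    (hd ▸ dvd_pow_orderOf_sub_one hp.pos _), fun h hh ↦ ?_⟩
  rw [hdeg, hd]
  exact IsCommonComposite.pow_orderOf_mul_lcm_le_natDegree hn hm hpnm hh
end

section
/- Let K be a field and f₁, f₂ ∈ K[x] nonconstant with a common composite. Suppose c₁, …, c_{2d} ∈ K̄ satisfy f₁(c_i) = f₁(c_{i+1}) for odd i and f₂(c_i) = f₂(c_{i+1}) for even i, with indices taken cyclically (c_{2d+1} = c₁). Then ∏_{i=1}^{d} (m₁(c_{2i−1})/m₂(c_{2i−1})) · (m₂(c_{2i})/m₁(c_{2i})) = 1, where m_j(a) is the multiplicity of a as a root of f_j(x) − f_j(a). -/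
/-!
Write `e_p(a)` for the multiplicity of `a` as a root of `p - p(a)`. It is multiplicative under
composition, `e_{g ∘ f}(a) = e_g(f a) · e_f(a)`, so a common composite `g₁ ∘ f₁ = g₂ ∘ f₂` gives
`m₁(a) / m₂(a) = e_{g₂}(f₂ a) / e_{g₁}(f₁ a)`. Along the cycle, consecutive points share their
`f₁`- resp. `f₂`-values, so the `e_{g₁}` factors cancel in pairs and the `e_{g₂}` factors telescope.
-/

open Polynomial Finset

namespace Polynomial

variable {R : Type*} [CommRing R]

noncomputable def ramificationIndex (p : R[X]) (a : R) : ℕ :=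
  rootMultiplicity a (p - C (p.eval a))

theorem ramificationIndex_pos {p : R[X]} (hp : p.natDegree ≠ 0) (a : R) :
    0 < p.ramificationIndex a := by
  have hne : p - C (p.eval a) ≠ 0 := fun h => hp (by rw [sub_eq_zero.mp h, natDegree_C])
  exact (rootMultiplicity_pos hne).mpr (by simp [IsRoot])

section IsDomain

variable [IsDomain R]

theorem rootMultiplicity_pow (p : R[X]) (n : ℕ) (a : R) :
    rootMultiplicity a (p ^ n) = n * rootMultiplicity a p := by
  classical
  rw [← count_roots, ← count_roots, roots_pow, Multiset.count_nsmul]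

theorem rootMultiplicity_comp (p q : R[X]) (a : R) :
    rootMultiplicity a (p.comp q) =
      rootMultiplicity (q.eval a) p * rootMultiplicity a (q - C (q.eval a)) := by
  set b := q.eval a
  obtain rfl | hp := eq_or_ne p 0
  · simp
  by_cases hq : q - C b = 0
  · rw [hq, sub_eq_zero.mp hq]
    simp
  obtain ⟨u, hpu, hu⟩ := p.exists_eq_pow_rootMultiplicity_mul_and_not_dvd hp b
  have hub : ¬(u.comp q).IsRoot a := by
    rwa [IsRoot, eval_comp, ← IsRoot, ← dvd_iff_isRoot]
  have hcomp : p.comp q = (q - C b) ^ rootMultiplicity b p * u.comp q := by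
    conv_lhs => rw [hpu]
    simp only [mul_comp, pow_comp, sub_comp, X_comp, C_comp]
  have hne : (q - C b) ^ rootMultiplicity b p * u.comp q ≠ 0 :=
    mul_ne_zero (pow_ne_zero _ hq) fun h => hub (by simp [h])
  rw [hcomp, rootMultiplicity_mul hne, rootMultiplicity_pow, rootMultiplicity_eq_zero hub,
    add_zero]

theorem ramificationIndex_comp (p q : R[X]) (a : R) :
    (p.comp q).ramificationIndex a = p.ramificationIndex (q.eval a) * q.ramificationIndex a := by
  have : p.comp q - C ((p.comp q).eval a) = (p - C (p.eval (q.eval a))).comp q := by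
    simp only [sub_comp, C_comp, eval_comp]
  rw [ramificationIndex, this, rootMultiplicity_comp]
  rfl

end IsDomain

end Polynomial

theorem prod_range_div_succ_of_ne_zero {G : Type*} [CommGroupWithZero G] {v : ℕ → G}
    (hv : ∀ i, v i ≠ 0) (n : ℕ) : ∏ i ∈ range n, v i / v (i + 1) = v 0 / v n := by
  induction n with
  | zero => simp [hv 0]
  | succ n ih => rw [prod_range_succ, ih, div_mul_div_cancel₀ (hv n)]

theorem prod_div_eq_one_of_alternating_cycle {α β G : Type*} [CommGroupWithZero G]
    {r : α → G} {φ₁ φ₂ : α → β} {s₁ s₂ : β → G} (hs₁ : ∀ b, s₁ b ≠ 0) (hs₂ : ∀ b, s₂ b ≠ 0)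
    (hr : ∀ a, r a = s₂ (φ₂ a) / s₁ (φ₁ a)) {c : ℕ → α} {d : ℕ} (hcyc : c (2 * d + 1) = c 1)
    (h₁ : ∀ i < d, φ₁ (c (2 * i + 1)) = φ₁ (c (2 * i + 2)))
    (h₂ : ∀ i < d, φ₂ (c (2 * i + 2)) = φ₂ (c (2 * i + 3))) :
    ∏ i ∈ range d, r (c (2 * i + 1)) / r (c (2 * i + 2)) = 1 := by
  have hstep : ∀ i ∈ range d, r (c (2 * i + 1)) / r (c (2 * i + 2)) =
      s₂ (φ₂ (c (2 * i + 1))) / s₂ (φ₂ (c (2 * (i + 1) + 1))) := by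
    intro i hi
    rw [hr, hr, ← h₁ i (mem_range.mp hi), h₂ i (mem_range.mp hi), div_div_div_cancel_right₀ (hs₁ _),
      show 2 * (i + 1) + 1 = 2 * i + 3 by ring]
  rw [prod_congr rfl hstep, prod_range_div_succ_of_ne_zero (fun i => hs₂ _), hcyc, div_self (hs₂ _)]

theorem stmt_18_general (K : Type*) [Field K] (f₁ f₂ : K[X])
    (hf₂ : f₂.natDegree ≠ 0)
    (hcc : ∃ g₁ g₂ : K[X], g₁.natDegree ≠ 0 ∧ g₂.natDegree ≠ 0 ∧ g₁.comp f₁ = g₂.comp f₂)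
    (F₁ F₂ : (AlgebraicClosure K)[X])
    (hF₁ : F₁ = f₁.map (algebraMap K (AlgebraicClosure K)))
    (hF₂ : F₂ = f₂.map (algebraMap K (AlgebraicClosure K)))
    (m₁ m₂ : AlgebraicClosure K → ℕ)
    (hm₁ : ∀ a, m₁ a = (F₁ - C (F₁.eval a)).rootMultiplicity a)
    (hm₂ : ∀ a, m₂ a = (F₂ - C (F₂.eval a)).rootMultiplicity a)
    (d : ℕ) (c : ℕ → AlgebraicClosure K)
    (hcyc : c (2 * d + 1) = c 1)
    (hodd : ∀ i, 1 ≤ i → i ≤ 2 * d → Odd i → F₁.eval (c i) = F₁.eval (c (i + 1)))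
    (heven : ∀ i, 1 ≤ i → i ≤ 2 * d → Even i → F₂.eval (c i) = F₂.eval (c (i + 1))) :
    ∏ i ∈ Finset.range d,
      ((m₁ (c (2 * i + 1)) : ℚ) / (m₂ (c (2 * i + 1)) : ℚ)) *
        ((m₂ (c (2 * i + 2)) : ℚ) / (m₁ (c (2 * i + 2)) : ℚ)) = 1 := by
  obtain ⟨g₁, g₂, hg₁, hg₂, hcomp⟩ := hcc
  set G₁ := g₁.map (algebraMap K (AlgebraicClosure K))
  set G₂ := g₂.map (algebraMap K (AlgebraicClosure K))
  have hG : G₁.comp F₁ = G₂.comp F₂ := by rw [hF₁, hF₂, ← map_comp, ← map_comp, hcomp]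
  have hmul : ∀ a, m₁ a * G₁.ramificationIndex (F₁.eval a) =
      G₂.ramificationIndex (F₂.eval a) * m₂ a := fun a => by
    rw [hm₁, hm₂, ← ramificationIndex, ← ramificationIndex, mul_comm, ← ramificationIndex_comp, hG,
      ramificationIndex_comp]
  have hm₂_pos : ∀ a, 0 < m₂ a := fun a =>
    hm₂ a ▸ ramificationIndex_pos (by rwa [hF₂, natDegree_map]) a
  have hG_pos : ∀ (g : K[X]), g.natDegree ≠ 0 → ∀ b,
      ((g.map (algebraMap K (AlgebraicClosure K))).ramificationIndex b : ℚ) ≠ 0 := fun g hg b =>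
    Nat.cast_ne_zero.mpr (ramificationIndex_pos (by rwa [natDegree_map]) b).ne'
  have hratio : ∀ a, (m₁ a : ℚ) / m₂ a =
      (G₂.ramificationIndex (F₂.eval a) : ℚ) / G₁.ramificationIndex (F₁.eval a) := fun a => by
    rw [div_eq_div_iff (Nat.cast_ne_zero.mpr (hm₂_pos a).ne') (hG_pos g₁ hg₁ _)]
    exact_mod_cast hmul a
  have hcycle := prod_div_eq_one_of_alternating_cycle (φ₁ := fun a => F₁.eval a) (φ₂ := fun a => F₂.eval a)
    (hG_pos g₁ hg₁) (hG_pos g₂ hg₂) hratio hcyc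
    (fun i _ => hodd (2 * i + 1) (by omega) (by omega) (odd_two_mul_add_one i))
    (fun i _ => heven (2 * i + 2) (by omega) (by omega) ⟨i + 1, by ring⟩)
  simpa only [div_eq_mul_inv _ ((m₁ _ : ℚ) / _), inv_div] using hcycle

theorem stmt_18 (K : Type*) [Field K] (f₁ f₂ : K[X])
    (hf₁ : f₁.natDegree ≠ 0) (hf₂ : f₂.natDegree ≠ 0)
    (hcc : ∃ g₁ g₂ : K[X], g₁.natDegree ≠ 0 ∧ g₂.natDegree ≠ 0 ∧ g₁.comp f₁ = g₂.comp f₂)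
    (F₁ F₂ : (AlgebraicClosure K)[X])
    (hF₁ : F₁ = f₁.map (algebraMap K (AlgebraicClosure K)))
    (hF₂ : F₂ = f₂.map (algebraMap K (AlgebraicClosure K)))
    (m₁ m₂ : AlgebraicClosure K → ℕ)
    (hm₁ : ∀ a, m₁ a = (F₁ - C (F₁.eval a)).rootMultiplicity a)
    (hm₂ : ∀ a, m₂ a = (F₂ - C (F₂.eval a)).rootMultiplicity a)
    (d : ℕ) (hd : 0 < d) (c : ℕ → AlgebraicClosure K)
    (hcyc : c (2 * d + 1) = c 1)
    (hodd : ∀ i, 1 ≤ i → i ≤ 2 * d → Odd i → F₁.eval (c i) = F₁.eval (c (i + 1)))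
    (heven : ∀ i, 1 ≤ i → i ≤ 2 * d → Even i → F₂.eval (c i) = F₂.eval (c (i + 1))) :
    ∏ i ∈ Finset.range d,
      ((m₁ (c (2 * i + 1)) : ℚ) / (m₂ (c (2 * i + 1)) : ℚ)) *
        ((m₂ (c (2 * i + 2)) : ℚ) / (m₁ (c (2 * i + 2)) : ℚ)) = 1 :=
  stmt_18_general K f₁ f₂ hf₂ hcc F₁ F₂ hF₁ hF₂ m₁ m₂ hm₁ hm₂ d c hcyc hodd heven
end
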